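/- Fix d ≥ 1. There exist constants c₁ > 1 and c₂ > 0 such that for every t > 0, C > 0, and ε > 0, the Cameron–Martin ball H_t(C) = { f : [0,t] → ℝ^d absolutely continuous, f(0) = 0, (∫₀ᵗ ‖f'(s)‖₂² ds)^{1/2} ≤ C } can be covered by at most c₁ · exp(c₂ · C t / ε) balls of radius ε in the L²([0,t]; ℝ^d) metric. -/

import Mathlib

open Real MeasureTheory

/-- The Cameron–Martin ball `H_t(C)`: absolutely continuous paths
`f : [0,t] → ℝ^d` with `f 0 = 0` whose derivative has L² norm at most `C`. -/
def CMBall (d : ℕ) (T R : ℝ) : Set (ℝ → EuclideanSpace ℝ (Fin d)) :=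
  {f | f 0 = 0 ∧ ∃ f' : ℝ → EuclideanSpace ℝ (Fin d),
      IntervalIntegrable f' MeasureTheory.volume 0 T ∧
      IntervalIntegrable (fun s => ‖f' s‖ ^ 2) MeasureTheory.volume 0 T ∧
      (∀ s ∈ Set.Icc (0:ℝ) T, f s = ∫ u in (0:ℝ)..s, f' u) ∧
      Real.sqrt (∫ s in (0:ℝ)..T, ‖f' s‖ ^ 2) ≤ R}

/-- The L² distance between two paths `[0,T] → ℝ^d`. -/
noncomputable def L2dist (d : ℕ) (T : ℝ)
    (u v : ℝ → EuclideanSpace ℝ (Fin d)) : ℝ :=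
  Real.sqrt (∫ s in (0:ℝ)..T, ‖u s - v s‖ ^ 2)

/-!
Cut `[0, t]` into `n + 1 ≈ 2Ct/ε` cells of length `h`. Within a cell a path `f ∈ H_t(C)` moves
by at most `√h` times the square root of its energy on that cell (Cauchy–Schwarz), so `f` is
`ε`-close in L² to the step function with values `p_j` as soon as `p` is `ε/(2√h)`-close to the
vector `v` of node values `v_j = f((j+1)h)`. The backward differences `(1 - shift) v` have norm
`≤ √h C`. The map `1 - shift` is unipotent, hence volume preserving, and has norm `≤ 2`, so
comparing volumes bounds every `ε/(2√h)`-separated subset of `{v | ‖(1 - shift) v‖ ≤ √h C}`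
by `4^{d(n+1)}` points; a maximal one is the required net, of size `exp(O(d C t/ε))`.
-/

open Finset Set Metric
open scoped NNReal ENNReal

theorem Metric.exists_finset_isCover_of_card_le {X : Type*} [PseudoEMetricSpace X] {ε : ℝ≥0}
    {s : Set X} {M : ℕ}
    (h : ∀ C : Finset X, ↑C ⊆ s → IsSeparated ε (C : Set X) → #C ≤ M) :
    ∃ N : Finset X, ↑N ⊆ s ∧ #N ≤ M ∧ IsCover ε s N := by
  have hsep : ∀ C ⊆ s, IsSeparated ε C → C.encard ≤ M := by
    intro C hCs hC
    by_contra! hlt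
    obtain ⟨D, hDC, hD⟩ := Set.exists_subset_encard_eq (Order.add_one_le_of_lt hlt)
    have hDfin : D.Finite := Set.finite_of_encard_eq_coe hD
    have := h hDfin.toFinset (by simpa using hDC.trans hCs) (by simpa using hC.subset hDC)
    rw [hDfin.encard_eq_coe_toFinset_card] at hD
    norm_cast at hD
    omega
  have hpack : packingNumber ε s ≠ ⊤ :=
    ne_top_of_le_ne_top (ENat.natCast_ne_top M) (iSup₂_le fun C hCs => iSup_le (hsep C hCs))
  have hfin : (maximalSeparatedSet ε s).Finite :=
    Set.finite_of_encard_le_coe (hsep _ maximalSeparatedSet_subset isSeparated_maximalSeparatedSet)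
  refine ⟨hfin.toFinset, by simpa using maximalSeparatedSet_subset,
    h _ (by simpa using maximalSeparatedSet_subset)
      (by simpa using isSeparated_maximalSeparatedSet),
    by simpa using isCover_maximalSeparatedSet hpack⟩

theorem LinearMap.det_one_sub_of_isNilpotent {R M : Type*} [CommRing R] [IsDomain R]
    [AddCommGroup M] [Module R M] [Module.Free R M] [Module.Finite R M]
    {φ : Module.End R M} (hφ : IsNilpotent φ) : LinearMap.det (1 - φ) = 1 := by
  have := φ.eval_charpoly 1
  rw [hφ.charpoly_eq_X_pow_finrank] at this
  simpa using this.symm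

section VolumePacking

variable {F : Type*} [NormedAddCommGroup F] [NormedSpace ℝ F] [FiniteDimensional ℝ F]
  {A : F →ₗ[ℝ] F} {R : ℝ} {δ : ℝ≥0}

theorem card_mul_pow_le_of_isSeparated (hA : LinearMap.det A = 1) {K : ℝ≥0}
    (hAK : ∀ x, ‖A x‖ ≤ K * ‖x‖) (hR : 0 ≤ R) (hδ : 0 < δ) {C : Finset F}
    (hCR : ∀ x ∈ C, ‖A x‖ ≤ R) (hC : IsSeparated δ (C : Set F)) :
    #C * (δ : ℝ) ^ Module.finrank ℝ F ≤ (2 * R + K * δ) ^ Module.finrank ℝ F := by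
  let _ : MeasurableSpace F := borel F
  have _ : BorelSpace F := ⟨rfl⟩
  set μ : Measure F := Measure.addHaar
  set N := Module.finrank ℝ F
  set ρ : ℝ := δ / 2 with hρ
  have hρ0 : 0 < ρ := by positivity
  have hdisj : (C : Set F).PairwiseDisjoint (ball · ρ) := fun x hx y hy hxy =>
    ball_disjoint_ball <| by
      have : (δ : ℝ≥0∞) < edist x y := hC hx hy hxy
      rw [edist_dist, ← ENNReal.ofReal_coe_nnreal,
        ENNReal.ofReal_lt_ofReal_iff_of_nonneg δ.coe_nonneg] at this
      linarith
  have hsub : (⋃ x ∈ C, ball x ρ) ⊆ A ⁻¹' closedBall 0 (R + K * ρ) := by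
    simp only [Set.iUnion_subset_iff]
    intro x hx z hz
    have hz' : ‖z - x‖ ≤ ρ := (mem_ball_iff_norm.1 hz).le
    rw [Set.mem_preimage, mem_closedBall_zero_iff]
    calc ‖A z‖ = ‖A x + A (z - x)‖ := by rw [map_sub, add_sub_cancel]
      _ ≤ ‖A x‖ + ‖A (z - x)‖ := norm_add_le _ _
      _ ≤ R + K * ρ := add_le_add (hCR x hx) ((hAK _).trans (by gcongr))
  have hvol : (#C : ℝ≥0∞) * (ENNReal.ofReal (ρ ^ N) * μ (ball 0 1))
      ≤ ENNReal.ofReal ((R + K * ρ) ^ N) * μ (ball 0 1) := by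
    calc (#C : ℝ≥0∞) * (ENNReal.ofReal (ρ ^ N) * μ (ball 0 1))
        = μ (⋃ x ∈ C, ball x ρ) := by
          rw [measure_biUnion_finset hdisj fun _ _ => measurableSet_ball]
          simp [Measure.addHaar_ball_of_pos μ _ hρ0, N]
      _ ≤ μ (A ⁻¹' closedBall 0 (R + K * ρ)) := measure_mono hsub
      _ = ENNReal.ofReal ((R + K * ρ) ^ N) * μ (ball 0 1) := by
          rw [Measure.addHaar_preimage_linearMap μ (by simp [hA]), hA,
            Measure.addHaar_closedBall μ _ (by positivity)]
          simp [N]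
  rw [← mul_assoc, ENNReal.mul_le_mul_iff_left (measure_ball_pos μ _ one_pos).ne'
    measure_ball_lt_top.ne, ← ENNReal.ofReal_natCast, ← ENNReal.ofReal_mul (by positivity),
    ENNReal.ofReal_le_ofReal_iff (by positivity)] at hvol
  calc (#C : ℝ) * (δ : ℝ) ^ N = 2 ^ N * (#C * ρ ^ N) := by rw [hρ, div_pow]; field_simp
    _ ≤ 2 ^ N * (R + K * ρ) ^ N := by gcongr
    _ = (2 * R + K * δ) ^ N := by rw [← mul_pow, hρ]; ring

theorem exists_finset_isCover_of_det_eq_one (hA : LinearMap.det A = 1)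
    (hA2 : ∀ x, ‖A x‖ ≤ 2 * ‖x‖) (hR : 0 ≤ R) (hδ : 0 < δ) (hRδ : R ≤ δ) :
    ∃ N : Finset F, #N ≤ 4 ^ Module.finrank ℝ F ∧ IsCover δ {x | ‖A x‖ ≤ R} N := by
  obtain ⟨N, -, hN, hcover⟩ := exists_finset_isCover_of_card_le (ε := δ)
    (s := {x | ‖A x‖ ≤ R}) (M := 4 ^ Module.finrank ℝ F) fun C hCR hC => by
      have hvol := card_mul_pow_le_of_isSeparated hA (K := 2) (by exact_mod_cast hA2) hR hδ
        hCR hC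
      have h4 : (2 * R + 2 * δ) ^ Module.finrank ℝ F
          ≤ 4 ^ Module.finrank ℝ F * (δ : ℝ) ^ Module.finrank ℝ F := by
        rw [← mul_pow]
        gcongr
        linarith
      have hcard : (#C : ℝ) ≤ 4 ^ Module.finrank ℝ F :=
        le_of_mul_le_mul_right (hvol.trans (by exact_mod_cast h4)) (by positivity)
      exact_mod_cast hcard
  exact ⟨N, hN, hcover⟩

end VolumePacking

namespace PiLp

variable {E : Type*} [NormedAddCommGroup E] [NormedSpace ℝ E] {n : ℕ}

def shiftRight (n : ℕ) :
    PiLp 2 (fun _ : Fin (n + 1) => E) →ₗ[ℝ] PiLp 2 (fun _ : Fin (n + 1) => E) where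
  toFun v := WithLp.toLp 2 (Fin.cons 0 fun i => v i.castSucc)
  map_add' u v := by ext j; cases j using Fin.cases <;> simp
  map_smul' c v := by ext j; cases j using Fin.cases <;> simp

@[simp] theorem shiftRight_apply_zero (v : PiLp 2 (fun _ : Fin (n + 1) => E)) :
    shiftRight n v 0 = 0 := rfl

@[simp] theorem shiftRight_apply_succ (v : PiLp 2 (fun _ : Fin (n + 1) => E)) (i : Fin n) :
    shiftRight n v i.succ = v i.castSucc := rfl

theorem isNilpotent_shiftRight :
    IsNilpotent (shiftRight n : Module.End ℝ (PiLp 2 (fun _ : Fin (n + 1) => E))) := by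
  have vanish : ∀ k (v : PiLp 2 (fun _ : Fin (n + 1) => E)) (j : Fin (n + 1)), (j : ℕ) < k →
      ((shiftRight n) ^ k) v j = 0 := by
    intro k
    induction k with
    | zero => intro v j hj; omega
    | succ k ih =>
      intro v j hj
      rw [pow_succ', Module.End.mul_apply]
      cases j using Fin.cases with
      | zero => exact shiftRight_apply_zero _
      | succ i =>
        exact (shiftRight_apply_succ _ i).trans (ih v i.castSucc (by simp at hj ⊢; omega))
  exact ⟨n + 1, LinearMap.ext fun v => PiLp.ext fun j => vanish _ v j j.isLt⟩

theorem norm_shiftRight_le (v : PiLp 2 (fun _ : Fin (n + 1) => E)) :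
    ‖shiftRight n v‖ ≤ ‖v‖ := by
  refine (pow_le_pow_iff_left₀ (norm_nonneg _) (norm_nonneg _) two_ne_zero).1 ?_
  rw [PiLp.norm_sq_eq_of_L2, PiLp.norm_sq_eq_of_L2, Fin.sum_univ_succ, Fin.sum_univ_castSucc]
  simp only [shiftRight_apply_zero, shiftRight_apply_succ, norm_zero]
  nlinarith [norm_nonneg (v (Fin.last n))]

theorem det_one_sub_shiftRight [FiniteDimensional ℝ E] :
    LinearMap.det (1 - shiftRight n : Module.End ℝ (PiLp 2 (fun _ : Fin (n + 1) => E))) = 1 :=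
  LinearMap.det_one_sub_of_isNilpotent isNilpotent_shiftRight

theorem norm_one_sub_shiftRight_le (v : PiLp 2 (fun _ : Fin (n + 1) => E)) :
    ‖(1 - shiftRight n) v‖ ≤ 2 * ‖v‖ := by
  calc ‖(1 - shiftRight n) v‖ = ‖v - shiftRight n v‖ := rfl
    _ ≤ ‖v‖ + ‖shiftRight n v‖ := norm_sub_le _ _
    _ ≤ 2 * ‖v‖ := by linarith [norm_shiftRight_le v]

end PiLp

theorem sq_intervalIntegral_le {g : ℝ → ℝ} {a b : ℝ} (hab : a ≤ b)
    (hg : IntervalIntegrable g volume a b)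
    (hg2 : IntervalIntegrable (fun s => g s ^ 2) volume a b) :
    (∫ s in a..b, g s) ^ 2 ≤ (b - a) * ∫ s in a..b, g s ^ 2 := by
  set I₁ := ∫ s in a..b, g s
  set I₂ := ∫ s in a..b, g s ^ 2
  set L := b - a
  have hexpand : ∫ s in a..b, (L * g s - I₁) ^ 2 = L * (L * I₂ - I₁ ^ 2) := by
    have : (fun s => (L * g s - I₁) ^ 2)
        = fun s => L ^ 2 * g s ^ 2 - 2 * L * I₁ * g s + I₁ ^ 2 := by
      ext; ring
    rw [this, intervalIntegral.integral_add ((hg2.const_mul _).sub (hg.const_mul _))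
        intervalIntegrable_const,
      intervalIntegral.integral_sub (hg2.const_mul _) (hg.const_mul _),
      intervalIntegral.integral_const_mul, intervalIntegral.integral_const_mul,
      intervalIntegral.integral_const, smul_eq_mul]
    ring
  have hnonneg : 0 ≤ L * (L * I₂ - I₁ ^ 2) :=
    hexpand ▸ intervalIntegral.integral_nonneg hab fun _ _ => sq_nonneg _
  rcases (sub_nonneg.2 hab).eq_or_lt with hL | hL
  · simp [I₁, I₂, L, ← hL, sub_eq_zero.1 hL.symm]
  · nlinarith [(mul_nonneg_iff_of_pos_left hL).1 hnonneg]

section Discretization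

variable {E : Type*} [NormedAddCommGroup E] [NormedSpace ℝ E]

theorem norm_sub_sq_le_of_eq_integral {f f' : ℝ → E} {t : ℝ}
    (hf' : IntervalIntegrable f' volume 0 t)
    (hf'2 : IntervalIntegrable (fun s => ‖f' s‖ ^ 2) volume 0 t)
    (hf : ∀ s ∈ Icc 0 t, f s = ∫ u in (0 : ℝ)..s, f' u)
    {a b : ℝ} (ha : 0 ≤ a) (hab : a ≤ b) (hbt : b ≤ t) :
    ‖f b - f a‖ ^ 2 ≤ (b - a) * ∫ s in a..b, ‖f' s‖ ^ 2 := by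
  have hmono : ∀ {x y}, 0 ≤ x → x ≤ y → y ≤ t → uIcc x y ⊆ uIcc 0 t := fun hx hxy hyt => by
    rw [uIcc_of_le hxy, uIcc_of_le (hx.trans (hxy.trans hyt))]
    exact Icc_subset_Icc hx hyt
  have hincr : f b - f a = ∫ u in a..b, f' u := by
    rw [hf b ⟨ha.trans hab, hbt⟩, hf a ⟨ha, hab.trans hbt⟩]
    exact intervalIntegral.integral_interval_sub_left
      (hf'.mono_set (hmono le_rfl (ha.trans hab) hbt))
      (hf'.mono_set (hmono le_rfl ha (hab.trans hbt)))
  have hnorm : ‖f b - f a‖ ≤ ∫ u in a..b, ‖f' u‖ :=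
    hincr ▸ intervalIntegral.norm_integral_le_integral_norm hab
  calc ‖f b - f a‖ ^ 2 ≤ (∫ u in a..b, ‖f' u‖) ^ 2 := by gcongr
    _ ≤ (b - a) * ∫ s in a..b, ‖f' s‖ ^ 2 :=
      sq_intervalIntegral_le hab (hf'.mono_set (hmono ha hab hbt)).norm
        (hf'2.mono_set (hmono ha hab hbt))

noncomputable def stepIndex (n : ℕ) (h s : ℝ) : Fin (n + 1) :=
  ⟨min ⌊s / h⌋₊ n, Nat.lt_succ_of_le (min_le_right _ _)⟩

variable {n : ℕ} {h : ℝ}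

theorem Fin.cast_val_add_one_le (j : Fin (n + 1)) : (j : ℝ) + 1 ≤ n + 1 := by
  exact_mod_cast j.isLt

theorem stepIndex_eq (hh : 0 < h) {j : Fin (n + 1)} {s : ℝ}
    (hs : s ∈ Ico (j * h) ((j + 1) * h)) : stepIndex n h s = j := by
  have hfloor : ⌊s / h⌋₊ = j := by
    rw [Nat.floor_eq_iff (div_nonneg ((by positivity : (0 : ℝ) ≤ j * h).trans hs.1) hh.le),
      le_div_iff₀ hh, div_lt_iff₀ hh]
    exact hs
  ext
  simp [stepIndex, hfloor, Nat.le_of_lt_succ j.isLt]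

theorem mem_Icc_stepIndex (hh : 0 < h) {s : ℝ} (hs : s ∈ Icc 0 ((n + 1) * h)) :
    s ∈ Icc (stepIndex n h s * h) ((stepIndex n h s + 1) * h) := by
  have hs0 : 0 ≤ s / h := div_nonneg hs.1 hh.le
  rcases le_or_gt ⌊s / h⌋₊ n with hle | hlt
  · have hidx : (stepIndex n h s : ℝ) = ⌊s / h⌋₊ := by simp [stepIndex, hle]
    rw [hidx, Set.mem_Icc, ← le_div_iff₀ hh, ← div_le_iff₀ hh]
    exact ⟨Nat.floor_le hs0, (Nat.lt_floor_add_one _).le⟩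
  · -- only `s = (n + 1) h` lands here
    have hidx : (stepIndex n h s : ℝ) = n := by simp [stepIndex, hlt.le]
    have hn : ((n + 1 : ℕ) : ℝ) ≤ ⌊s / h⌋₊ := Nat.cast_le.2 hlt
    push_cast at hn
    have hsn : (n + 1) * h ≤ s := (le_div_iff₀ hh).1 (hn.trans (Nat.floor_le hs0))
    rw [hidx, Set.mem_Icc]
    constructor <;> nlinarith [hs.2]

theorem uIcc_cell_subset (hh : 0 ≤ h) (j : Fin (n + 1)) :
    uIcc (j * h) ((j + 1) * h) ⊆ uIcc 0 ((n + 1) * h) := by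
  have hj := Fin.cast_val_add_one_le j
  rw [Set.uIcc_of_le (by nlinarith), Set.uIcc_of_le (by positivity)]
  exact Icc_subset_Icc (by positivity) (by nlinarith)

theorem intervalIntegrable_of_cells {g : ℝ → ℝ}
    (hg : ∀ j : Fin (n + 1), IntervalIntegrable g volume (j * h) ((j + 1) * h)) :
    IntervalIntegrable g volume 0 ((n + 1) * h) := by
  simpa using IntervalIntegrable.trans_iterate (a := fun k : ℕ => k * h) (n := n + 1)
    fun k hk => by simpa using hg ⟨k, hk⟩

theorem sum_integral_cells {g : ℝ → ℝ}
    (hg : ∀ j : Fin (n + 1), IntervalIntegrable g volume (j * h) ((j + 1) * h)) :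
    ∑ j : Fin (n + 1), ∫ s in j * h..(j + 1) * h, g s = ∫ s in 0..(n + 1) * h, g s := by
  have := intervalIntegral.sum_integral_adjacent_intervals (a := fun k : ℕ => k * h)
    (n := n + 1) fun k hk => by simpa using hg ⟨k, hk⟩
  rw [← Fin.sum_univ_eq_sum_range] at this
  simpa using this

theorem eqOn_stepIndex (hh : 0 < h) (g : Fin (n + 1) → ℝ) (j : Fin (n + 1)) :
    EqOn (fun s => g (stepIndex n h s)) (fun _ => g j) (Ioo (j * h) ((j + 1) * h)) :=
  fun _ hs => congrArg g (stepIndex_eq hh (Ioo_subset_Ico_self hs))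

theorem intervalIntegrable_cell_comp_stepIndex (hh : 0 < h) (g : Fin (n + 1) → ℝ)
    (j : Fin (n + 1)) :
    IntervalIntegrable (fun s => g (stepIndex n h s)) volume (j * h) ((j + 1) * h) :=
  intervalIntegrable_const.congr_uIoo <| by
    rw [uIoo_of_le (by nlinarith)]
    exact (eqOn_stepIndex hh g j).symm

theorem integral_comp_stepIndex (hh : 0 < h) (g : Fin (n + 1) → ℝ) :
    ∫ s in 0..(n + 1) * h, g (stepIndex n h s) = h * ∑ j, g j := by
  rw [← sum_integral_cells (intervalIntegrable_cell_comp_stepIndex hh g), Finset.mul_sum]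
  refine Finset.sum_congr rfl fun j _ => ?_
  rw [intervalIntegral.integral_congr_Ioo_of_le (by nlinarith) (eqOn_stepIndex hh g j),
    intervalIntegral.integral_const, smul_eq_mul]
  ring

theorem norm_one_sub_shiftRight_nodes_sq_le (hh : 0 < h) {f f' : ℝ → E} (hf0 : f 0 = 0)
    (hf' : IntervalIntegrable f' volume 0 ((n + 1) * h))
    (hf'2 : IntervalIntegrable (fun s => ‖f' s‖ ^ 2) volume 0 ((n + 1) * h))
    (hf : ∀ s ∈ Icc 0 ((n + 1) * h), f s = ∫ u in (0 : ℝ)..s, f' u) :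
    ‖(1 - PiLp.shiftRight n) (WithLp.toLp 2 fun j : Fin (n + 1) => f ((j + 1) * h))‖ ^ 2
      ≤ h * ∫ s in 0..(n + 1) * h, ‖f' s‖ ^ 2 := by
  have hincr : ‖(1 - PiLp.shiftRight n) (WithLp.toLp 2 fun j : Fin (n + 1) => f ((j + 1) * h))‖ ^ 2
      = ∑ j : Fin (n + 1), ‖f ((j + 1) * h) - f (j * h)‖ ^ 2 := by
    rw [PiLp.norm_sq_eq_of_L2]
    refine Finset.sum_congr rfl fun j _ => ?_
    cases j using Fin.cases <;> simp [hf0]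
  rw [hincr, ← sum_integral_cells fun j => hf'2.mono_set (uIcc_cell_subset hh.le j),
    Finset.mul_sum]
  gcongr with j
  have hj := Fin.cast_val_add_one_le j
  calc ‖f ((j + 1) * h) - f (j * h)‖ ^ 2
      ≤ ((j + 1) * h - j * h) * ∫ s in j * h..(j + 1) * h, ‖f' s‖ ^ 2 :=
        norm_sub_sq_le_of_eq_integral hf' hf'2 hf (by positivity) (by nlinarith) (by nlinarith)
    _ = h * ∫ s in j * h..(j + 1) * h, ‖f' s‖ ^ 2 := by ring

theorem norm_sub_comp_stepIndex_sq_le (hh : 0 < h) {f f' : ℝ → E}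
    (hf' : IntervalIntegrable f' volume 0 ((n + 1) * h))
    (hf'2 : IntervalIntegrable (fun s => ‖f' s‖ ^ 2) volume 0 ((n + 1) * h))
    (hf : ∀ s ∈ Icc 0 ((n + 1) * h), f s = ∫ u in (0 : ℝ)..s, f' u) (p : Fin (n + 1) → E)
    {s : ℝ} (hs : s ∈ Icc 0 ((n + 1) * h)) :
    ‖f s - p (stepIndex n h s)‖ ^ 2
      ≤ 2 * h * (∫ u in stepIndex n h s * h..(stepIndex n h s + 1) * h, ‖f' u‖ ^ 2)
        + 2 * ‖f ((stepIndex n h s + 1) * h) - p (stepIndex n h s)‖ ^ 2 := by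
  obtain ⟨hjs, hsj⟩ := mem_Icc_stepIndex hh hs
  set j := stepIndex n h s
  have hj := Fin.cast_val_add_one_le j
  have hincr : ‖f ((j + 1) * h) - f s‖ ^ 2 ≤ h * ∫ u in j * h..(j + 1) * h, ‖f' u‖ ^ 2 :=
    calc ‖f ((j + 1) * h) - f s‖ ^ 2
        ≤ ((j + 1) * h - s) * ∫ u in s..(j + 1) * h, ‖f' u‖ ^ 2 :=
          norm_sub_sq_le_of_eq_integral hf' hf'2 hf hs.1 hsj (by nlinarith)
      _ ≤ h * ∫ u in j * h..(j + 1) * h, ‖f' u‖ ^ 2 := by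
          refine mul_le_mul (by linarith) ?_
            (intervalIntegral.integral_nonneg hsj fun _ _ => sq_nonneg _) hh.le
          exact intervalIntegral.integral_mono_interval hjs hsj le_rfl
            (Filter.Eventually.of_forall fun _ => sq_nonneg _)
            (hf'2.mono_set (uIcc_cell_subset hh.le j))
  have htri : ‖f s - p j‖ ≤ ‖f ((j + 1) * h) - f s‖ + ‖f ((j + 1) * h) - p j‖ := by
    rw [norm_sub_rev (f ((j + 1) * h)) (f s)]
    exact norm_sub_le_norm_sub_add_norm_sub _ _ _
  nlinarith [norm_nonneg (f s - p j),
    sq_nonneg (‖f ((j + 1) * h) - f s‖ - ‖f ((j + 1) * h) - p j‖)]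

theorem integral_norm_sub_comp_stepIndex_sq_le (hh : 0 < h) {f f' : ℝ → E}
    (hf' : IntervalIntegrable f' volume 0 ((n + 1) * h))
    (hf'2 : IntervalIntegrable (fun s => ‖f' s‖ ^ 2) volume 0 ((n + 1) * h))
    (hf : ∀ s ∈ Icc 0 ((n + 1) * h), f s = ∫ u in (0 : ℝ)..s, f' u) (p : Fin (n + 1) → E) :
    ∫ s in 0..(n + 1) * h, ‖f s - p (stepIndex n h s)‖ ^ 2
      ≤ 2 * h ^ 2 * (∫ s in 0..(n + 1) * h, ‖f' s‖ ^ 2)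
        + 2 * h * ∑ j : Fin (n + 1), ‖f ((j + 1) * h) - p j‖ ^ 2 := by
  have hT : (0 : ℝ) ≤ (n + 1) * h := by positivity
  set G : Fin (n + 1) → ℝ := fun j =>
    2 * h * (∫ u in j * h..(j + 1) * h, ‖f' u‖ ^ 2) + 2 * ‖f ((j + 1) * h) - p j‖ ^ 2
  -- No integrability of the left-hand side is needed: it is dominated by a step function.
  have hint : ∫ s in 0..(n + 1) * h, ‖f s - p (stepIndex n h s)‖ ^ 2
      ≤ ∫ s in 0..(n + 1) * h, G (stepIndex n h s) := by
    rw [intervalIntegral.integral_of_le hT, intervalIntegral.integral_of_le hT]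
    refine integral_mono_of_nonneg (Filter.Eventually.of_forall fun _ => sq_nonneg _)
      ((intervalIntegrable_iff_integrableOn_Ioc_of_le hT).1
        (intervalIntegrable_of_cells (intervalIntegrable_cell_comp_stepIndex hh G)))
      ((ae_restrict_iff' measurableSet_Ioc).2 (Filter.Eventually.of_forall fun s hs => ?_))
    exact norm_sub_comp_stepIndex_sq_le hh hf' hf'2 hf p (Ioc_subset_Icc_self hs)
  calc _ ≤ h * ∑ j, G j := hint.trans (integral_comp_stepIndex hh G).le
    _ = 2 * h ^ 2 * ∑ j : Fin (n + 1), (∫ u in j * h..(j + 1) * h, ‖f' u‖ ^ 2)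
        + 2 * h * ∑ j : Fin (n + 1), ‖f ((j + 1) * h) - p j‖ ^ 2 := by
        simp only [G, mul_add, Finset.mul_sum, Finset.sum_add_distrib]
        congr 1 <;> exact Finset.sum_congr rfl fun _ _ => by ring
    _ = _ := by rw [sum_integral_cells fun j => hf'2.mono_set (uIcc_cell_subset hh.le j)]

theorem L2dist_comp_stepIndex_le {d : ℕ} {h C ε : ℝ} (hh : 0 < h) (hC : 0 ≤ C) (hε : 0 < ε)
    (hCh : 2 * (h * C) ≤ ε) {f f' : ℝ → EuclideanSpace ℝ (Fin d)}
    (hf' : IntervalIntegrable f' volume 0 ((n + 1) * h))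
    (hf'2 : IntervalIntegrable (fun s => ‖f' s‖ ^ 2) volume 0 ((n + 1) * h))
    (hf : ∀ s ∈ Icc 0 ((n + 1) * h), f s = ∫ u in (0 : ℝ)..s, f' u)
    (hE : ∫ s in 0..(n + 1) * h, ‖f' s‖ ^ 2 ≤ C ^ 2)
    {p : PiLp 2 (fun _ : Fin (n + 1) => EuclideanSpace ℝ (Fin d))}
    (hp : ‖WithLp.toLp 2 (fun j : Fin (n + 1) => f ((j + 1) * h)) - p‖ ≤ ε / (2 * √h)) :
    L2dist d ((n + 1) * h) f (fun s => p (stepIndex n h s)) ≤ ε := by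
  rw [L2dist, Real.sqrt_le_left hε.le]
  calc ∫ s in 0..(n + 1) * h, ‖f s - p (stepIndex n h s)‖ ^ 2
      ≤ 2 * h ^ 2 * (∫ s in 0..(n + 1) * h, ‖f' s‖ ^ 2)
        + 2 * h * ∑ j : Fin (n + 1), ‖f ((j + 1) * h) - p j‖ ^ 2 :=
        integral_norm_sub_comp_stepIndex_sq_le hh hf' hf'2 hf p
    _ = 2 * h ^ 2 * (∫ s in 0..(n + 1) * h, ‖f' s‖ ^ 2)
        + 2 * h * ‖WithLp.toLp 2 (fun j : Fin (n + 1) => f ((j + 1) * h)) - p‖ ^ 2 := by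
        rw [PiLp.norm_sq_eq_of_L2]
        rfl
    _ ≤ 2 * h ^ 2 * C ^ 2 + 2 * h * (ε / (2 * √h)) ^ 2 := by gcongr
    _ ≤ ε ^ 2 := by
        rw [div_pow, mul_pow, Real.sq_sqrt hh.le]
        field_simp
        nlinarith [pow_le_pow_left₀ (by positivity) hCh 2]

end Discretization

theorem exists_finset_L2dist_le_of_mem_CMBall (d n : ℕ) {t C ε : ℝ} (ht : 0 < t) (hC : 0 ≤ C)
    (hε : 0 < ε) (hn : 2 * C * t ≤ (n + 1) * ε) :
    ∃ S : Finset (ℝ → EuclideanSpace ℝ (Fin d)), #S ≤ 4 ^ ((n + 1) * d) ∧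
      ∀ f ∈ CMBall d t C, ∃ k ∈ S, L2dist d t f k ≤ ε := by
  classical
  set h := t / (n + 1)
  have hh : 0 < h := by positivity
  have hth : (n + 1) * h = t := by simp only [h]; field_simp
  have hCh : 2 * (h * C) ≤ ε := by
    rw [← hth] at hn
    nlinarith
  clear_value h
  -- `R ≤ δ` is exactly `2 h C ≤ ε`; `δ` makes the second error term `2 h δ²` equal to `ε² / 2`.
  set R := √h * C
  set δ : ℝ≥0 := ⟨ε / (2 * √h), by positivity⟩
  have hRδ : R ≤ δ := by
    show √h * C ≤ ε / (2 * √h)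
    rw [le_div_iff₀ (by positivity)]
    nlinarith [Real.mul_self_sqrt hh.le]
  obtain ⟨N, hNcard, hNcover⟩ := exists_finset_isCover_of_det_eq_one
    (F := PiLp 2 (fun _ : Fin (n + 1) => EuclideanSpace ℝ (Fin d)))
    PiLp.det_one_sub_shiftRight PiLp.norm_one_sub_shiftRight_le (by positivity)
    (show (0 : ℝ) < ε / (2 * √h) by positivity) hRδ
  refine ⟨N.image fun p s => p (stepIndex n h s), card_image_le.trans (hNcard.trans_eq ?_), ?_⟩
  · rw [(WithLp.linearEquiv 2 ℝ (Fin (n + 1) → EuclideanSpace ℝ (Fin d))).finrank_eq,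
      Module.finrank_pi_fintype]
    simp
  rintro f ⟨hf0, f', hf', hf'2, hf, hfC⟩
  rw [← hth] at hf' hf'2 hf hfC ⊢
  have hE : ∫ s in 0..(n + 1) * h, ‖f' s‖ ^ 2 ≤ C ^ 2 := (Real.sqrt_le_left hC).1 hfC
  have hv : ‖(1 - PiLp.shiftRight n) (WithLp.toLp 2 fun j : Fin (n + 1) => f ((j + 1) * h))‖
      ≤ R := by
    refine (pow_le_pow_iff_left₀ (norm_nonneg _) (by positivity) two_ne_zero).1 ?_
    calc _ ≤ h * ∫ s in 0..(n + 1) * h, ‖f' s‖ ^ 2 :=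
          norm_one_sub_shiftRight_nodes_sq_le hh hf0 hf' hf'2 hf
      _ ≤ R ^ 2 := by rw [mul_pow, Real.sq_sqrt hh.le]; gcongr
  obtain ⟨p, hpN, hvp⟩ := hNcover hv
  refine ⟨_, mem_image_of_mem _ hpN, L2dist_comp_stepIndex_le hh hC hε hCh hf' hf'2 hf hE ?_⟩
  rw [← dist_eq_norm]
  exact edist_le_coe.1 hvp

/-- Kolmogorov–Tihomirov entropy bound: there are constants
`c₁ > 1`, `c₂ > 0` such that for all `t, C, ε > 0`, the Cameron–Martin ball
`H_t(C)` admits an `ε`-net in the L² metric of cardinality at most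
`c₁ · exp(c₂ C t / ε)`. -/
theorem stmt4 (d : ℕ) (hd : 1 ≤ d) :
    ∃ c₁ c₂ : ℝ, 1 < c₁ ∧ 0 < c₂ ∧
      ∀ t C ε : ℝ, 0 < t → 0 < C → 0 < ε →
        ∃ S : Finset (ℝ → EuclideanSpace ℝ (Fin d)),
          (S.card : ℝ) ≤ c₁ * Real.exp (c₂ * C * t / ε) ∧
          ∀ f ∈ CMBall d t C, ∃ k ∈ S, L2dist d t f k ≤ ε := by
  have hd' : (0 : ℝ) < d := by exact_mod_cast hd
  refine ⟨16 ^ d, 2 * d * log 4, one_lt_pow₀ (by norm_num) (by omega),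
    by have := log_pos (show (1 : ℝ) < 4 by norm_num); positivity, fun t C ε ht hC hε => ?_⟩
  set n := ⌈2 * C * t / ε⌉₊
  have hn : (n : ℝ) ≤ 2 * C * t / ε + 1 := (Nat.ceil_lt_add_one (by positivity)).le
  obtain ⟨S, hS, hcover⟩ := exists_finset_L2dist_le_of_mem_CMBall d n ht hC.le hε <| by
    rw [← div_le_iff₀ hε]
    linarith [Nat.le_ceil (2 * C * t / ε)]
  refine ⟨S, ?_, hcover⟩
  calc (#S : ℝ) ≤ 4 ^ ((n + 1) * d) := by exact_mod_cast hS
    _ = exp (((n + 1) * d : ℕ) * log 4) := by rw [exp_nat_mul, exp_log (by norm_num)]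
    _ ≤ exp ((2 * C * t / ε + 2) * d * log 4) := by
        gcongr
        push_cast
        gcongr ?_ * _
        linarith
    _ = exp ((2 * d : ℕ) * log 4) * exp (2 * d * log 4 * C * t / ε) := by
        rw [← exp_add]
        push_cast
        ring_nf
    _ = 16 ^ d * exp (2 * d * log 4 * C * t / ε) := by
        rw [exp_nat_mul, exp_log (by norm_num), pow_mul]
        norm_num
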